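/- Let H be a finite-dimensional real inner product space, let β > 0, let f : H → ℝ ∪ {+∞} be proper, lower semicontinuous, and convex, and let g : H → ℝ be convex and differentiable with β-Lipschitz gradient. Then for every γ > 0, a point x ∈ H minimizes f + g over H if and only if x is a fixed point of prox_{γf} ∘ (Id − γ∇g), i.e., x = prox_{γf}(x − γ∇g(x)). -/

import Mathlib

open Filter Topology

noncomputable section

/-- Convexity for extended-real-valued functions. -/
def ConvexE {E : Type*} [AddCommGroup E] [Module ℝ E] (f : E → EReal) : Prop :=
  ∀ x y : E, ∀ a b : ℝ, 0 ≤ a → 0 ≤ b → a + b = 1 →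
    f (a • x + b • y) ≤ (a : EReal) * f x + (b : EReal) * f y

/-!
Both sides are equivalent to variational inequalities. Comparing a minimizer `x` of `F + h`
(`F` convex, `h` differentiable) with the points of the segment from `x` to `y` and letting the
segment shrink gives `F x ≤ F y + ⟪∇h x, y - x⟫`. For `f + g` this reads
`f x ≤ f y + ⟪∇g x, y - x⟫`, and for the prox problem, with `u = x - γ ∇g x`,
`γ f p ≤ γ f y + ⟪p - u, y - p⟫`. When `x = p` the second inequality is `γ` times the first,
which in turn gives minimality of `f + g` through the gradient inequality of the convex `g`.
Conversely, adding the first at `y = p` to the second at `y = x` leaves `‖x - p‖² ≤ 0`.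
-/

open Set AffineMap RealInnerProductSpace

theorem EReal.le_add_coe_of_coe_mul_le {γ r : ℝ} (hγ : 0 < γ) {A B : EReal}
    (h : (γ : EReal) * A ≤ γ * B + (γ * r : ℝ)) : A ≤ B + r := by
  induction B using EReal.rec with
  | bot => simp_all [EReal.coe_mul_bot_of_pos, EReal.mul_eq_bot, hγ.not_gt]
  | top => simp
  | coe b =>
    induction A using EReal.rec with
    | bot => exact bot_le
    | top => simp_all [EReal.coe_mul_top_of_pos, ← EReal.coe_mul, ← EReal.coe_add]
    | coe a =>
      norm_cast at h ⊢
      nlinarith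

theorem ConvexE.const_mul {E : Type*} [AddCommGroup E] [Module ℝ E] {F : E → EReal} {γ : ℝ}
    (hγ : 0 ≤ γ) (hF : ConvexE F) : ConvexE fun z => (γ : EReal) * F z := by
  intro x y a b ha hb hab
  calc (γ : EReal) * F (a • x + b • y) ≤ γ * (a * F x + b * F y) :=
        mul_le_mul_of_nonneg_left (hF x y a b ha hb hab) (by exact_mod_cast hγ)
    _ = a * (γ * F x) + b * (γ * F y) := by
        rw [EReal.left_distrib_of_nonneg_of_ne_top (by exact_mod_cast hγ) (EReal.coe_ne_top γ),
          mul_left_comm, mul_left_comm (γ : EReal)]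

theorem ConvexE.le_lineMap {E : Type*} [AddCommGroup E] [Module ℝ E] {F : E → EReal}
    (hF : ConvexE F) {x y : E} {a c t : ℝ} (hx : F x = a) (hy : F y = c) (ht : t ∈ Icc (0 : ℝ) 1) :
    F (lineMap x y t) ≤ ((1 - t) * a + t * c : ℝ) := by
  rw [lineMap_apply_module]
  exact (hF x y (1 - t) t (by linarith [ht.2]) ht.1 (by ring)).trans_eq (by rw [hx, hy]; norm_cast)

theorem HasDerivAt.le_of_eventually_mul_le_sub {φ : ℝ → ℝ} {φ' a r : ℝ} (hφ : HasDerivAt φ φ' a)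
    (h : ∀ᶠ t in 𝓝[>] a, (t - a) * r ≤ φ t - φ a) : r ≤ φ' := by
  refine ge_of_tendsto ((hasDerivAt_iff_tendsto_slope.mp hφ).mono_left (nhdsGT_le_nhdsNE a)) ?_
  filter_upwards [h, self_mem_nhdsWithin] with t ht hat
  rw [slope_def_field, le_div_iff₀ (sub_pos.mpr hat), mul_comm]
  exact ht

theorem ne_top_of_forall_add_le {E : Type*} {F : E → EReal} {h : E → ℝ} {x z : E} (hz : F z ≠ ⊤)
    (hmin : ∀ y, F x + h x ≤ F y + h y) : F x ≠ ⊤ := by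
  intro hx
  have := hmin z
  rw [hx, EReal.top_add_coe, top_le_iff] at this
  exact EReal.add_ne_top hz (EReal.coe_ne_top _) this

theorem eq_of_le_add_inner_of_mul_le {H : Type*} [NormedAddCommGroup H] [InnerProductSpace ℝ H]
    {a b γ : ℝ} {v x p : H} (hγ : 0 ≤ γ) (hx : a ≤ b + ⟪v, p - x⟫)
    (hp : γ * b ≤ γ * a + ⟪p - (x - γ • v), x - p⟫) : x = p := by
  have hinner : ⟪p - (x - γ • v), x - p⟫ = -‖x - p‖ ^ 2 - γ * ⟪v, p - x⟫ := by
    rw [show p - (x - γ • v) = -(x - p) + γ • v by abel, inner_add_left, inner_neg_left,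
      real_inner_self_eq_norm_sq, real_inner_smul_left, ← neg_sub p x, inner_neg_right]
    ring
  have hdist : ‖x - p‖ ^ 2 ≤ 0 := by linarith [mul_le_mul_of_nonneg_left hx hγ]
  rw [← sub_eq_zero, ← norm_eq_zero]
  exact pow_eq_zero_iff two_ne_zero |>.mp (le_antisymm hdist (sq_nonneg _))

section

variable {H : Type*} [NormedAddCommGroup H] [InnerProductSpace ℝ H] [CompleteSpace H]

theorem HasGradientAt.hasDerivAt_comp_lineMap {h : H → ℝ} {v x : H} (hh : HasGradientAt h v x)
    (y : H) : HasDerivAt (fun t : ℝ => h (lineMap x y t)) ⟪v, y - x⟫ 0 := by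
  have := hh.hasFDerivAt.comp_hasDerivAt_of_eq 0 hasDerivAt_lineMap (lineMap_apply_zero x y).symm
  rwa [InnerProductSpace.toDual_apply_apply] at this

theorem hasGradientAt_half_norm_sub_sq (u y : H) :
    HasGradientAt (fun z => 1 / 2 * ‖u - z‖ ^ 2) (y - u) y := by
  rw [hasGradientAt_iff_hasFDerivAt]
  refine ((((hasFDerivAt_id y).const_sub u).norm_sq).const_mul (1 / 2)).congr_fderiv ?_
  ext w
  simp

theorem ConvexOn.add_inner_le_of_hasGradientAt {g : H → ℝ} {v x : H} (hg : ConvexOn ℝ univ g)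
    (hgx : HasGradientAt g v x) (y : H) : g x + ⟪v, y - x⟫ ≤ g y := by
  have hconv : ConvexOn ℝ univ fun t : ℝ => g (lineMap x y t) :=
    hg.comp_affineMap (lineMap x y)
  have := hconv.le_slope_of_hasDerivAt (mem_univ 0) (mem_univ 1) zero_lt_one
    (hgx.hasDerivAt_comp_lineMap y)
  simp only [slope_def_field, lineMap_apply_one, lineMap_apply_zero, sub_zero, div_one] at this
  linarith

theorem ConvexE.le_add_inner_of_forall_add_le {F : H → EReal} {h : H → ℝ} {v x : H}
    (hF : ConvexE F) (hF_ne_bot : ∀ z, F z ≠ ⊥) (hh : HasGradientAt h v x)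
    (hmin : ∀ y, F x + h x ≤ F y + h y) (y : H) : F x ≤ F y + (⟪v, y - x⟫ : ℝ) := by
  obtain hy | hy := eq_or_ne (F y) ⊤
  · simp [hy]
  obtain ⟨c, hc⟩ : ∃ c : ℝ, F y = c := ⟨_, (EReal.coe_toReal hy (hF_ne_bot y)).symm⟩
  obtain ⟨a, ha⟩ : ∃ a : ℝ, F x = a :=
    ⟨_, (EReal.coe_toReal (ne_top_of_forall_add_le hy hmin) (hF_ne_bot x)).symm⟩
  rw [ha, hc]
  norm_cast
  suffices a - c ≤ ⟪v, y - x⟫ by linarith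
  refine (hh.hasDerivAt_comp_lineMap y).le_of_eventually_mul_le_sub ?_
  filter_upwards [Ioc_mem_nhdsGT zero_lt_one] with t ht
  have hseg := hmin (lineMap x y t)
  have hFt := hF.le_lineMap ha hc (Ioc_subset_Icc_self ht)
  have : (a : EReal) + h x ≤ ((1 - t) * a + t * c : ℝ) + h (lineMap x y t) := by
    rw [← ha]; exact hseg.trans (by gcongr)
  norm_cast at this
  simp only [lineMap_apply_zero, sub_zero]
  linarith

theorem forall_add_le_of_le_add_inner {F : H → EReal} {h : H → ℝ} {v x : H}
    (hh_convex : ConvexOn ℝ univ h) (hh : HasGradientAt h v x)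
    (hvi : ∀ y, F x ≤ F y + (⟪v, y - x⟫ : ℝ)) (y : H) : F x + h x ≤ F y + h y :=
  calc F x + h x ≤ F y + (⟪v, y - x⟫ : ℝ) + h x := by gcongr; exact hvi y
    _ = F y + (h x + ⟪v, y - x⟫ : ℝ) := by rw [add_assoc, add_comm (⟪v, y - x⟫ : EReal)]; norm_cast
    _ ≤ F y + h y := by gcongr; exact_mod_cast hh_convex.add_inner_le_of_hasGradientAt hh y

end

theorem minimizer_iff_fixed_point_general
    {H : Type*} [NormedAddCommGroup H] [InnerProductSpace ℝ H] [FiniteDimensional ℝ H]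
    (f : H → EReal)
    (hf_proper : ∃ z, f z ≠ ⊤) (hf_ne_bot : ∀ z, f z ≠ ⊥)
    (hf_convex : ConvexE f)
    (g : H → ℝ) (g' : H → H)
    (hg_convex : ConvexOn ℝ Set.univ g)
    (hg_grad : ∀ z : H, HasGradientAt g (g' z) z)
    (x : H) :
    ∀ γ : ℝ, 0 < γ → ∀ p : H,
      (∀ y : H,
        (γ : EReal) * f p + ((1/2 * ‖(x - γ • g' x) - p‖^2 : ℝ) : EReal) ≤
          (γ : EReal) * f y + ((1/2 * ‖(x - γ • g' x) - y‖^2 : ℝ) : EReal)) →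
      ((∀ y : H, f x + (g x : EReal) ≤ f y + (g y : EReal)) ↔ x = p) := by
  intro γ hγ p hp
  obtain ⟨z, hz⟩ := hf_proper
  set u := x - γ • g' x
  have hprox : ∀ y, (γ : EReal) * f p ≤ γ * f y + (⟪p - u, y - p⟫ : ℝ) :=
    (hf_convex.const_mul hγ.le).le_add_inner_of_forall_add_le
      (fun y => by simp [EReal.mul_eq_bot, hf_ne_bot y, hγ.not_gt])
      (hasGradientAt_half_norm_sub_sq u p) hp
  constructor
  · intro hmin
    have hvi := hf_convex.le_add_inner_of_forall_add_le hf_ne_bot (hg_grad x) hmin p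
    have hfx : f x ≠ ⊤ := ne_top_of_forall_add_le hz hmin
    have hγfp : (γ : EReal) * f p ≠ ⊤ := ne_top_of_forall_add_le (F := fun y => (γ : EReal) * f y)
      (h := fun y => 1 / 2 * ‖u - y‖ ^ 2) (z := z) (by simp [EReal.mul_eq_top, hz, hγ.not_gt]) hp
    have hfp : f p ≠ ⊤ := fun h => hγfp (by rw [h, EReal.coe_mul_top_of_pos hγ])
    have hx := hprox x
    rw [← EReal.coe_toReal hfx (hf_ne_bot x), ← EReal.coe_toReal hfp (hf_ne_bot p)] at hvi hx
    norm_cast at hvi hx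
    exact eq_of_le_add_inner_of_mul_le hγ.le hvi hx
  · intro hxp
    subst hxp
    refine forall_add_le_of_le_add_inner hg_convex (hg_grad x) fun y => ?_
    refine EReal.le_add_coe_of_coe_mul_le hγ ?_
    have : ⟪x - u, y - x⟫ = γ * ⟪g' x, y - x⟫ := by simp [u, real_inner_smul_left]
    simpa [this] using hprox y

/-- Fixed-point characterization of the minimizers of `f + g`: for every `γ > 0`,
`x` minimizes `f + g` if and only if `x = prox_{γ f}(x - γ ∇g x)`, where the proximal
point is expressed through its defining minimization property. -/
theorem minimizer_iff_fixed_point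
    {H : Type*} [NormedAddCommGroup H] [InnerProductSpace ℝ H] [FiniteDimensional ℝ H]
    (β : ℝ) (hβ : 0 < β)
    (f : H → EReal)
    (hf_proper : ∃ z, f z ≠ ⊤) (hf_ne_bot : ∀ z, f z ≠ ⊥)
    (hf_lsc : LowerSemicontinuous f) (hf_convex : ConvexE f)
    (g : H → ℝ) (g' : H → H)
    (hg_convex : ConvexOn ℝ Set.univ g)
    (hg_grad : ∀ z : H, HasGradientAt g (g' z) z)
    (hg_lip : ∀ z w : H, ‖g' z - g' w‖ ≤ β * ‖z - w‖)
    (x : H) :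
    ∀ γ : ℝ, 0 < γ → ∀ p : H,
      (∀ y : H,
        (γ : EReal) * f p + ((1/2 * ‖(x - γ • g' x) - p‖^2 : ℝ) : EReal) ≤
          (γ : EReal) * f y + ((1/2 * ‖(x - γ • g' x) - y‖^2 : ℝ) : EReal)) →
      ((∀ y : H, f x + (g x : EReal) ≤ f y + (g y : EReal)) ↔ x = p) :=
  minimizer_iff_fixed_point_general f hf_proper hf_ne_bot hf_convex g g' hg_convex hg_grad x
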